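/- Let (X, σ) be a shift space with more than one point having strong specification with gap size τ: for all words v, w in the language L there is u ∈ L_τ with vuw ∈ L. Then h_top(X) ≥ (log 2)/(n + τ) > 0, where n is any length such that #L_n ≥ 2. In particular, any nontrivial shift with strong specification has positive topological entropy. -/

import Mathlib

open Filter

/-- The left shift on one-sided sequences. -/
def shiftMap {A : Type*} (x : ℕ → A) : ℕ → A := fun n => x (n + 1)

/-- The language of `X`. -/
def langL {A : Type*} (X : Set (ℕ → A)) : Set (List A) :=
  {w | ∃ x ∈ X, ∀ i : Fin w.length, x i.val = w.get i}

/-- The number of length-`n` words in the language of `X`. -/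
noncomputable def wcount {A : Type*} (X : Set (ℕ → A)) (n : ℕ) : ℕ :=
  {w ∈ langL X | w.length = n}.ncard

/-! A connecting word of length `τ` glues any two words of lengths `n` and `m` into a word of length
`n + τ + m` from which both are recovered, so `#L_n · #L_m ≤ #L_{n+τ+m}` and hence
`(#L_n)^k ≤ #L_{k(n+τ)}`. Taking logarithms along the subsequence `k(n+τ)` gives
`h ≥ log #L_n / (n+τ) ≥ log 2 / (n+τ)`, and two distinct points of `X` differ on some prefix. -/

def HasStrongSpec {A : Type*} (X : Set (ℕ → A)) (τ : ℕ) : Prop :=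
  ∀ v ∈ langL X, ∀ w ∈ langL X, ∃ u ∈ langL X, u.length = τ ∧ v ++ u ++ w ∈ langL X

section Language

variable {A : Type*} {X : Set (ℕ → A)}

theorem nil_mem_langL (hX : X.Nonempty) : [] ∈ langL X :=
  let ⟨x, hx⟩ := hX
  ⟨x, hx, fun i => i.elim0⟩

theorem Set.Nonempty.of_mem_langL {w : List A} (hw : w ∈ langL X) : X.Nonempty :=
  let ⟨x, hx, _⟩ := hw
  ⟨x, hx⟩

theorem ofFn_mem_langL {x : ℕ → A} (hx : x ∈ X) (n : ℕ) :
    List.ofFn (fun j : Fin n => x j) ∈ langL X :=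
  ⟨x, hx, fun j => by simp⟩

theorem finite_langL_length_eq [Finite A] (n : ℕ) : {w ∈ langL X | w.length = n}.Finite :=
  (List.finite_length_eq A n).subset fun _ hw => hw.2

theorem wcount_zero (hX : X.Nonempty) : wcount X 0 = 1 := by
  have : {w ∈ langL X | w.length = 0} = {[]} := by
    ext w
    simp only [List.length_eq_zero_iff, Set.mem_singleton_iff]
    exact ⟨And.right, fun hw => ⟨hw ▸ nil_mem_langL hX, hw⟩⟩
  rw [wcount, this, Set.ncard_singleton]

theorem Set.Nonempty.of_wcount_ne_zero {n : ℕ} (h : wcount X n ≠ 0) : X.Nonempty :=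
  let ⟨_, hw, _⟩ := Set.nonempty_of_ncard_ne_zero h
  .of_mem_langL hw

theorem exists_two_le_wcount_of_ne [Finite A] {x y : ℕ → A} (hx : x ∈ X) (hy : y ∈ X)
    (hxy : x ≠ y) : ∃ n, 1 ≤ n ∧ 2 ≤ wcount X n := by
  obtain ⟨i, hi⟩ := Function.ne_iff.mp hxy
  refine ⟨i + 1, by omega, (Set.one_lt_ncard (finite_langL_length_eq _)).mpr ?_⟩
  refine ⟨_, ⟨ofFn_mem_langL hx (i + 1), by simp⟩, _, ⟨ofFn_mem_langL hy (i + 1), by simp⟩, ?_⟩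
  intro hxy'
  exact hi (congrFun (List.ofFn_inj.mp hxy') (Fin.last i))

end Language

section Specification

variable {A : Type*} [Finite A] {X : Set (ℕ → A)} {τ : ℕ}

theorem HasStrongSpec.wcount_mul_le (hspec : HasStrongSpec X τ) (n m : ℕ) :
    wcount X n * wcount X m ≤ wcount X (n + τ + m) := by
  classical
  have : ∀ p : List A × List A, ∃ u : List A, p.1 ∈ langL X → p.2 ∈ langL X →
      u.length = τ ∧ p.1 ++ u ++ p.2 ∈ langL X := fun p =>
    if h : p.1 ∈ langL X ∧ p.2 ∈ langL X then
      let ⟨u, _, hu⟩ := hspec _ h.1 _ h.2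
      ⟨u, fun _ _ => hu⟩
    else ⟨[], fun h1 h2 => (h ⟨h1, h2⟩).elim⟩
  choose u hu using this
  rw [wcount, wcount, ← Set.ncard_prod]
  refine Set.ncard_le_ncard_of_injOn (fun p => p.1 ++ u p ++ p.2) ?_ ?_
    (finite_langL_length_eq _)
  · rintro p ⟨⟨hp₁, rfl⟩, hp₂, rfl⟩
    obtain ⟨hlen, hmem⟩ := hu p hp₁ hp₂
    exact ⟨hmem, by simp [hlen, add_assoc]⟩
  · rintro p ⟨⟨hp₁, hn⟩, hp₂, -⟩ q ⟨⟨hq₁, hn'⟩, hq₂, -⟩ hpq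
    have hlen : (p.1 ++ u p).length = (q.1 ++ u q).length := by
      simp [(hu p hp₁ hp₂).1, (hu q hq₁ hq₂).1, hn, hn']
    obtain ⟨hpq₁, hpq₂⟩ := List.append_inj hpq hlen
    exact Prod.ext (List.append_inj hpq₁ (hn.trans hn'.symm)).1 hpq₂

theorem HasStrongSpec.wcount_pow_le (hspec : HasStrongSpec X τ) (hX : X.Nonempty) (n k : ℕ) :
    wcount X n ^ k ≤ wcount X (k * (n + τ)) := by
  induction k with
  | zero => simp [wcount_zero hX]
  | succ k ih =>
    calc wcount X n ^ (k + 1) = wcount X n * wcount X n ^ k := pow_succ' _ _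
      _ ≤ wcount X n * wcount X (k * (n + τ)) := Nat.mul_le_mul_left _ ih
      _ ≤ wcount X (n + τ + k * (n + τ)) := hspec.wcount_mul_le _ _
      _ = wcount X ((k + 1) * (n + τ)) := by rw [add_mul, one_mul, add_comm]

end Specification

theorem log_div_le_of_tendsto_of_pow_le {a : ℕ → ℕ} {h : ℝ}
    (ha : Tendsto (fun n : ℕ => Real.log (a n) / n) atTop (nhds h)) {c p : ℕ} (hc : 0 < c)
    (hp : 0 < p) (hpow : ∀ k, c ^ k ≤ a (k * p)) : Real.log c / p ≤ h := by
  have hsub : Tendsto (fun k : ℕ => Real.log (a (k * p)) / ((k * p : ℕ) : ℝ)) atTop (nhds h) :=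
    ha.comp (tendsto_atTop_mono (fun k => Nat.le_mul_of_pos_right k hp) tendsto_id)
  refine ge_of_tendsto hsub ?_
  filter_upwards [eventually_gt_atTop 0] with k hk
  have hlog : k * Real.log c ≤ Real.log (a (k * p)) := by
    rw [← Real.log_pow]
    exact Real.log_le_log (by positivity) (by exact_mod_cast hpow k)
  calc Real.log c / p = k * Real.log c / ((k * p : ℕ) : ℝ) := by
        push_cast
        rw [mul_div_mul_left _ _ (by positivity)]
    _ ≤ Real.log (a (k * p)) / ((k * p : ℕ) : ℝ) := by gcongr

theorem stmt_14_general {A : Type*} [Fintype A]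
    (X : Set (ℕ → A)) (τ : ℕ)
    (hspec : ∀ v ∈ langL X, ∀ w ∈ langL X,
      ∃ u ∈ langL X, u.length = τ ∧ v ++ u ++ w ∈ langL X)
    (h : ℝ)
    (hh : Tendsto (fun n : ℕ => Real.log (wcount X n) / n) atTop (nhds h)) :
    (∀ n : ℕ, 1 ≤ n → 2 ≤ wcount X n →
      Real.log 2 / ((n : ℝ) + τ) ≤ h) ∧
    ((∃ x ∈ X, ∃ y ∈ X, x ≠ y) → 0 < h) := by
  have hbound : ∀ n : ℕ, 1 ≤ n → 2 ≤ wcount X n → Real.log 2 / ((n : ℝ) + τ) ≤ h := by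
    intro n _ h2
    have hX : X.Nonempty := .of_wcount_ne_zero (n := n) (by omega)
    have hgrowth := log_div_le_of_tendsto_of_pow_le hh (by omega : 0 < wcount X n)
      (by omega : 0 < n + τ) (HasStrongSpec.wcount_pow_le hspec hX n)
    calc Real.log 2 / ((n : ℝ) + τ) ≤ Real.log (wcount X n) / ((n : ℝ) + τ) := by
          gcongr
          exact_mod_cast h2
      _ ≤ h := by exact_mod_cast hgrowth
  refine ⟨hbound, ?_⟩
  rintro ⟨x, hx, y, hy, hxy⟩
  obtain ⟨n, hn, h2⟩ := exists_two_le_wcount_of_ne hx hy hxy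
  exact (by positivity : 0 < Real.log 2 / ((n : ℝ) + τ)).trans_le (hbound n hn h2)

/-- A shift space with strong specification (connecting words of length
exactly `τ`) and at least two length-`n` words has topological entropy at
least `log 2/(n+τ)`; in particular a nontrivial shift with strong
specification has positive entropy. -/
theorem stmt_14 {A : Type*} [Fintype A] [TopologicalSpace A] [DiscreteTopology A]
    (X : Set (ℕ → A)) (hne : X.Nonempty) (hcl : IsClosed X)
    (hinv : shiftMap '' X = X) (τ : ℕ)
    (hspec : ∀ v ∈ langL X, ∀ w ∈ langL X,
      ∃ u ∈ langL X, u.length = τ ∧ v ++ u ++ w ∈ langL X)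
    (h : ℝ)
    (hh : Tendsto (fun n : ℕ => Real.log (wcount X n) / n) atTop (nhds h)) :
    (∀ n : ℕ, 1 ≤ n → 2 ≤ wcount X n →
      Real.log 2 / ((n : ℝ) + τ) ≤ h) ∧
    ((∃ x ∈ X, ∃ y ∈ X, x ≠ y) → 0 < h) :=
  stmt_14_general X τ hspec h hh
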